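/- For every λ > 0, the map φ_λ is injective and 𝔤 = φ_λ(𝔨) ⊕ 𝔭 as real vector spaces; equivalently, the composition of φ_λ with the quotient projection 𝔤 → 𝔤/𝔭 is an ℝ-linear isomorphism from 𝔨 onto 𝔤/𝔭. -/

import Mathlib

open Matrix Complex

noncomputable section

/-- The 3×3 matrix J with J₀₂ = J₁₁ = J₂₀ = 1 and all other entries 0. -/
def Jm : Matrix (Fin 3) (Fin 3) ℂ := !![0,0,1;0,1,0;1,0,0]

/-- The real Lie algebra 𝔤 = su(2,1) = {A : Aᴴ·J + J·A = 0, tr A = 0}. -/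
def su21 : Set (Matrix (Fin 3) (Fin 3) ℂ) :=
  {A | Aᴴ * Jm + Jm * A = 0 ∧ A.trace = 0}

/-- The real Lie algebra 𝔨 = su(2). -/
def su2 : Set (Matrix (Fin 2) (Fin 2) ℂ) :=
  {X | Xᴴ = -X ∧ X.trace = 0}

/-- The element X(t,z) of su(2), with rows (i·t, -conj z) and (z, -i·t). -/
def Xk (t : ℝ) (z : ℂ) : Matrix (Fin 2) (Fin 2) ℂ :=
  !![Complex.I * t, -(starRingEnd ℂ) z; z, -(Complex.I * t)]

/-- The matrix φ_λ(X(t,u+iv)) from Theorem 3.3 of the paper. -/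
def phiE (l t u v : ℝ) : Matrix (Fin 3) (Fin 3) ℂ :=
  !![(((1+l^2)/(4*l) : ℝ) : ℂ) * (Complex.I * t),
     -((((5-3*l^2)/(4*Real.sqrt l)) : ℝ) : ℂ) * u
       - ((((3-5*l^2)/(4*l*Real.sqrt l)) : ℝ) : ℂ) * (Complex.I * v),
     ((((-15+34*l^2-15*l^4)/(16*l^2)) : ℝ) : ℂ) * (Complex.I * t);
     ((Real.sqrt l : ℝ) : ℂ) * u + (((1/Real.sqrt l) : ℝ) : ℂ) * (Complex.I * v),
     -((((1+l^2)/(2*l)) : ℝ) : ℂ) * (Complex.I * t),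
     ((((5-3*l^2)/(4*Real.sqrt l)) : ℝ) : ℂ) * u
       - ((((3-5*l^2)/(4*l*Real.sqrt l)) : ℝ) : ℂ) * (Complex.I * v);
     Complex.I * t,
     -((Real.sqrt l : ℝ) : ℂ) * u + (((1/Real.sqrt l) : ℝ) : ℂ) * (Complex.I * v),
     (((1+l^2)/(4*l) : ℝ) : ℂ) * (Complex.I * t)]

/-- The ℝ-linear map φ_λ, written as a map on 2×2 matrices: for X ∈ su(2) we have
X = X(t,z) with t = (X₀₀).im and z = X₁₀, and φ_λ(X(t,u+iv)) = `phiE l t u v`. -/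
def phiMap (l : ℝ) (X : Matrix (Fin 2) (Fin 2) ℂ) : Matrix (Fin 3) (Fin 3) ℂ :=
  phiE l (X 0 0).im (X 1 0).re (X 1 0).im

/-- 𝔭 = {A ∈ 𝔤 : A₁₀ = A₂₀ = A₂₁ = 0}. -/
def pSub : Set (Matrix (Fin 3) (Fin 3) ℂ) :=
  {A ∈ su21 | A 1 0 = 0 ∧ A 2 0 = 0 ∧ A 2 1 = 0}

/-!
For `A ∈ 𝔤` the entry `A₂₀` is purely imaginary and `A₂₁ = -conj A₁₀`, so `A ↦ (A₁₀, Im A₂₀)`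
identifies `𝔤/𝔭` with `ℂ × ℝ`. Composed with `φ_λ` this becomes
`X(t, u + iv) ↦ (√λ·u + i·v/√λ, t)`, which is visibly a bijection for `λ > 0`.
-/

def lowerCoords (A : Matrix (Fin 3) (Fin 3) ℂ) : ℂ × ℝ := (A 1 0, (A 2 0).im)

lemma lowerCoords_sub (A B : Matrix (Fin 3) (Fin 3) ℂ) :
    lowerCoords (A - B) = lowerCoords A - lowerCoords B := by
  simp [lowerCoords]

lemma sub_mem_su21 {A B : Matrix (Fin 3) (Fin 3) ℂ} (hA : A ∈ su21) (hB : B ∈ su21) :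
    A - B ∈ su21 := by
  obtain ⟨hAJ, hAtr⟩ := hA
  obtain ⟨hBJ, hBtr⟩ := hB
  constructor
  · rw [conjTranspose_sub, sub_mul, mul_sub, eq_neg_of_add_eq_zero_left hAJ,
      eq_neg_of_add_eq_zero_left hBJ]
    abel
  · rw [trace_sub, hAtr, hBtr, sub_zero]

lemma re_apply_two_zero_of_mem_su21 {A : Matrix (Fin 3) (Fin 3) ℂ} (hA : A ∈ su21) :
    (A 2 0).re = 0 := by
  have h := congr_arg re (congrFun (congrFun hA.1 0) 0)
  simp [Jm, mul_apply, vecMul, dotProduct, Fin.sum_univ_three, conjTranspose_apply] at h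
  linarith

lemma apply_two_one_of_mem_su21 {A : Matrix (Fin 3) (Fin 3) ℂ} (hA : A ∈ su21) :
    A 2 1 = -(starRingEnd ℂ) (A 1 0) := by
  have h := congrFun (congrFun hA.1 0) 1
  simp [Jm, mul_apply, vecMul, dotProduct, Fin.sum_univ_three, conjTranspose_apply] at h
  linear_combination h

lemma mem_pSub_iff {A : Matrix (Fin 3) (Fin 3) ℂ} (hA : A ∈ su21) :
    A ∈ pSub ↔ lowerCoords A = 0 := by
  have h20 : A 2 0 = 0 ↔ (A 2 0).im = 0 := by
    simp [Complex.ext_iff, re_apply_two_zero_of_mem_su21 hA]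
  simp only [pSub, Set.mem_sep_iff, lowerCoords, Prod.mk_eq_zero, h20,
    apply_two_one_of_mem_su21 hA]
  constructor
  · rintro ⟨-, h10, h20, -⟩
    exact ⟨h10, h20⟩
  · rintro ⟨h10, h20⟩
    exact ⟨hA, h10, h20, by simp [h10]⟩

lemma sub_mem_pSub_iff {A B : Matrix (Fin 3) (Fin 3) ℂ} (hA : A ∈ su21) (hB : B ∈ su21) :
    A - B ∈ pSub ↔ lowerCoords A = lowerCoords B := by
  rw [mem_pSub_iff (sub_mem_su21 hA hB), lowerCoords_sub, sub_eq_zero]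

lemma phiE_mem_su21 (l t u v : ℝ) : phiE l t u v ∈ su21 := by
  constructor
  · ext i j
    fin_cases i <;> fin_cases j <;>
      simp [phiE, Jm, mul_apply, Fin.sum_univ_three, conjTranspose_apply,
        -ofReal_pow, -ofReal_div] <;>
      ring
  · simp [phiE, trace_fin_three, -ofReal_pow, -ofReal_div]
    push_cast
    ring

lemma phiMap_mem_su21 (l : ℝ) (X : Matrix (Fin 2) (Fin 2) ℂ) : phiMap l X ∈ su21 :=
  phiE_mem_su21 _ _ _ _

lemma lowerCoords_phiE {l : ℝ} (hl : 0 < l) (t u v : ℝ) :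
    lowerCoords (phiE l t u v) = (⟨Real.sqrt l * u, v / Real.sqrt l⟩, t) := by
  have hs : Real.sqrt l ≠ 0 := (Real.sqrt_pos.2 hl).ne'
  simp [lowerCoords, phiE, Complex.ext_iff]
  field_simp

lemma Xk_mem_su2 (t : ℝ) (z : ℂ) : Xk t z ∈ su2 := by
  constructor
  · ext i j
    fin_cases i <;> fin_cases j <;> simp [Xk, conjTranspose_apply]
  · simp [Xk, trace_fin_two]

lemma eq_Xk_of_mem_su2 {X : Matrix (Fin 2) (Fin 2) ℂ} (hX : X ∈ su2) :
    X = Xk (X 0 0).im (X 1 0) := by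
  obtain ⟨hskew, htr⟩ := hX
  have h00 : (X 0 0).re = 0 := by
    have h := congr_arg re (congrFun (congrFun hskew 0) 0)
    simp [conjTranspose_apply] at h
    linarith
  have h01 : X 0 1 = -(starRingEnd ℂ) (X 1 0) := by
    have h := congrFun (congrFun hskew 0) 1
    simp [conjTranspose_apply] at h
    linear_combination h
  have h11 : X 1 1 = -X 0 0 := by
    rw [trace_fin_two] at htr
    linear_combination htr
  ext i j
  fin_cases i <;> fin_cases j <;> simp [Xk, Complex.ext_iff, h00, h01, h11]

lemma phiMap_Xk (l t : ℝ) (z : ℂ) : phiMap l (Xk t z) = phiE l t z.re z.im := by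
  simp [phiMap, Xk]

lemma injOn_lowerCoords_phiMap {l : ℝ} (hl : 0 < l) :
    Set.InjOn (fun X => lowerCoords (phiMap l X)) su2 := by
  intro X hX Y hY hXY
  have hs : Real.sqrt l ≠ 0 := (Real.sqrt_pos.2 hl).ne'
  rw [eq_Xk_of_mem_su2 hX, eq_Xk_of_mem_su2 hY] at hXY ⊢
  simp only [phiMap_Xk, lowerCoords_phiE hl, Prod.mk.injEq, Complex.mk.injEq] at hXY
  obtain ⟨⟨hre, him⟩, h00⟩ := hXY
  rw [h00, Complex.ext (mul_left_cancel₀ hs hre) ((div_left_inj' hs).1 him)]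

lemma exists_lowerCoords_phiMap_eq {l : ℝ} (hl : 0 < l) (w : ℂ × ℝ) :
    ∃ X ∈ su2, lowerCoords (phiMap l X) = w := by
  have hs : Real.sqrt l ≠ 0 := (Real.sqrt_pos.2 hl).ne'
  refine ⟨Xk w.2 ⟨w.1.re / Real.sqrt l, Real.sqrt l * w.1.im⟩, Xk_mem_su2 _ _, ?_⟩
  rw [phiMap_Xk, lowerCoords_phiE hl]
  ext <;> field_simp

/-- φ_λ is injective and 𝔤 = φ_λ(𝔨) ⊕ 𝔭 as real vector spaces. -/
theorem stmt6 (l : ℝ) (hl : 0 < l) :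
    (∀ X ∈ su2, ∀ Y ∈ su2, phiMap l X = phiMap l Y → X = Y) ∧
    (∀ A ∈ su21, ∃! q : su2 × pSub,
      A = phiMap l (q.1 : Matrix (Fin 2) (Fin 2) ℂ) + (q.2 : Matrix (Fin 3) (Fin 3) ℂ)) := by
  refine ⟨fun X hX Y hY hXY => injOn_lowerCoords_phiMap hl hX hY (by simp only [hXY]),
    fun A hA => ?_⟩
  obtain ⟨X, hX, hXA⟩ := exists_lowerCoords_phiMap_eq hl (lowerCoords A)
  refine ⟨(⟨X, hX⟩, ⟨A - phiMap l X, (sub_mem_pSub_iff hA (phiMap_mem_su21 l X)).2 hXA.symm⟩),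
    (add_sub_cancel _ _).symm, ?_⟩
  rintro ⟨⟨Y, hY⟩, ⟨P, hP⟩⟩ hAYP
  obtain rfl : P = A - phiMap l Y := eq_sub_of_add_eq' hAYP.symm
  have hYA : lowerCoords (phiMap l Y) = lowerCoords A :=
    ((sub_mem_pSub_iff hA (phiMap_mem_su21 l Y)).1 hP).symm
  obtain rfl : Y = X := injOn_lowerCoords_phiMap hl hY hX (hYA.trans hXA.symm)
  rfl
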